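/- Let 0 < t_1 < 1 and let L be an even positive integer. Define D_L = { π(2m-1)/L : m = -L/2+1, ..., L/2 } and, for y ∈ ℤ, s_±(y) = (1/L) ∑_{k ∈ D_L} e^{-i k y} / (1 + t_1 e^{± i k}). Then s_±(y) is real for all y, s_+(y) = s_-(-y), and s_±(y+L) = -s_±(y) (antiperiodicity), and |s_±(y)| ≤ C ρ^{|y|_L} for some constants C > 0, 0 < ρ < 1 depending only on t_1, where |y|_L = min over n ∈ ℤ of |y - nL| is the distance on ℤ_L (exponential decay uniform in L). -/

import Mathlib

/-!
Expanding `1/(1 + t e^{ik})` as a geometric series of length `L`, and using `e^{ikL} = -1` for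
`k ∈ D_L`, gives `(1 + t^L)⁻¹ ∑_{j<L} (-t)^j e^{ikj}`. Orthogonality of the characters `e^{ikr}`
over `D_L` then yields the closed form `s₊(y) = (-1)^⌊y/L⌋ (-t)^(y mod L) / (1 + t^L)`, which is
real and bounded by `|t|^(y mod L)`. The reflection `k ↦ -k` of `D_L` gives `s₋(y) = s₊(-y)`, and
antiperiodicity is again `e^{-ikL} = -1`.
-/

/-- The kernel `s_ω(y) = (1/L) ∑_{k ∈ D_L} e^{-iky}/(1 + t₁ e^{ω i k})`, where
`D_L = {π(2m-1)/L : m = -L/2+1, …, L/2}` and `ω = ε = ±1`. -/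
noncomputable def sOmega (t1 : ℝ) (L : ℕ) (ε : ℝ) (y : ℤ) : ℂ :=
  (1 / (L : ℂ)) *
    ∑ m ∈ Finset.Icc (-(L : ℤ) / 2 + 1) ((L : ℤ) / 2),
      Complex.exp (-Complex.I * ((Real.pi * (2 * (m : ℝ) - 1) / (L : ℝ) : ℝ) : ℂ) * (y : ℂ)) /
        (1 + (t1 : ℂ) *
          Complex.exp ((ε : ℂ) * Complex.I * ((Real.pi * (2 * (m : ℝ) - 1) / (L : ℝ) : ℝ) : ℂ)))

open Complex Finset

noncomputable def momentum (L : ℕ) (m : ℤ) : ℝ := Real.pi * (2 * (m : ℝ) - 1) / (L : ℝ)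

noncomputable def momentumWindow (L : ℕ) : Finset ℤ := Icc (-(L : ℤ) / 2 + 1) ((L : ℤ) / 2)

section

variable {L : ℕ}

theorem sOmega_eq (t : ℝ) (ε : ℝ) (y : ℤ) :
    sOmega t L ε y = (1 / (L : ℂ)) * ∑ m ∈ momentumWindow L,
      cexp (-I * momentum L m * y) / (1 + t * cexp (ε * I * momentum L m)) :=
  rfl

theorem geom_sum_of_pow_eq_one {K : Type*} [Field K] [DecidableEq K] {z : K} {n : ℕ}
    (hz : z ^ n = 1) :
    ∑ j ∈ range n, z ^ j = if z = 1 then (n : K) else 0 := by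
  split_ifs with h
  · simp [h]
  · rw [geom_sum_eq h, hz, sub_self, zero_div]

theorem sum_range_ite_dvd_sub {M : Type*} [AddCommMonoid M] (hL : L ≠ 0) (f : ℕ → M) (y : ℤ) :
    ∑ j ∈ range L, (if (L : ℤ) ∣ (j - y) then f j else 0) = f (y % L).toNat := by
  have hL' : (0 : ℤ) < L := by omega
  have hy := Int.emod_nonneg y hL'.ne'
  have hy' := Int.emod_lt_of_pos y hL'
  have hdvd : ∀ j ∈ range L, (L : ℤ) ∣ (j - y) ↔ (y % L).toNat = j := by
    intro j hj
    rw [mem_range] at hj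
    rw [← Int.modEq_iff_dvd, Int.ModEq, Int.emod_eq_of_lt (a := j) (by omega) (by omega)]
    omega
  rw [sum_congr rfl fun j hj => if_congr (hdvd j hj) rfl rfl, sum_ite_eq, if_pos]
  rw [mem_range]
  omega

theorem sum_momentumWindow_eq_sum_range {M : Type*} [AddCommMonoid M] (f : ℤ → M) :
    ∑ m ∈ momentumWindow L, f m = ∑ j ∈ range L, f (-(L : ℤ) / 2 + 1 + j) := by
  apply sum_nbij' (fun m => (m - (-(L : ℤ) / 2 + 1)).toNat) (fun j => -(L : ℤ) / 2 + 1 + j)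
  all_goals intro x hx
  all_goals simp only [momentumWindow, mem_Icc, mem_range] at hx ⊢
  all_goals first | omega | congr 1; omega

theorem cexp_I_momentum_mul_L (hL : L ≠ 0) (m : ℤ) : cexp (I * momentum L m * L) = -1 := by
  have h : I * momentum L m * L = ((2 * m - 1 : ℤ) : ℂ) * (Real.pi * I) := by
    simp only [momentum]
    push_cast
    field_simp
  rw [h, exp_int_mul, exp_pi_mul_I, Odd.neg_one_zpow ⟨m - 1, by ring⟩]

theorem sum_momentumWindow_cexp (hL : L ≠ 0) (r : ℤ) :
    ∑ m ∈ momentumWindow L, cexp (I * momentum L m * r) =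
      if (L : ℤ) ∣ r then (L : ℂ) * (-1) ^ (r / L) else 0 := by
  set a := -(L : ℤ) / 2 + 1
  set ζ := cexp (2 * Real.pi * I / L)
  have hζ : IsPrimitiveRoot ζ L := isPrimitiveRoot_exp L hL
  have hterm : ∀ j : ℕ,
      cexp (I * momentum L (a + j) * r) = cexp (I * momentum L a * r) * (ζ ^ r) ^ j := by
    intro j
    rw [← zpow_natCast, ← zpow_mul, ← exp_int_mul, ← exp_add]
    congr 1
    simp only [momentum]
    push_cast
    field_simp
    ring
  have hζL : (ζ ^ r) ^ L = 1 := by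
    rw [← zpow_natCast, ← zpow_mul, mul_comm, zpow_mul, zpow_natCast, hζ.pow_eq_one, one_zpow]
  rw [sum_momentumWindow_eq_sum_range, sum_congr rfl fun j _ => hterm j, ← mul_sum,
    geom_sum_of_pow_eq_one hζL]
  simp only [hζ.zpow_eq_one_iff_dvd]
  split_ifs with h
  · obtain ⟨n, rfl⟩ := h
    rw [Int.mul_ediv_cancel_left n (by omega), Int.cast_mul, Int.cast_natCast, ← mul_assoc,
      mul_comm _ (n : ℂ), exp_int_mul, cexp_I_momentum_mul_L hL, mul_comm]
  · rw [mul_zero]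

theorem cexp_div_one_add_mul_cexp_momentum (hL : Even L) (hL0 : L ≠ 0) (t : ℝ) (m y : ℤ) :
    cexp (-I * momentum L m * y) / (1 + t * cexp (I * momentum L m)) =
      (∑ j ∈ range L, (-t : ℂ) ^ j * cexp (I * momentum L m * ((j - y : ℤ) : ℂ))) /
        (1 + t ^ L) := by
  set x := (t : ℂ) * cexp (I * momentum L m)
  have hxL : x ^ L = -t ^ L := by
    rw [mul_pow, ← exp_nat_mul, mul_comm (L : ℂ), cexp_I_momentum_mul_L hL0, mul_neg_one]
  have hgeom : (1 + x) * ∑ j ∈ range L, (-x) ^ j = 1 + t ^ L := by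
    rw [← sub_neg_eq_add 1 x, mul_neg_geom_sum, hL.neg_pow, hxL, sub_neg_eq_add]
  have hden : (1 : ℂ) + t ^ L ≠ 0 := by
    exact_mod_cast (add_pos_of_pos_of_nonneg one_pos (hL.pow_nonneg t)).ne'
  have hx : 1 + x ≠ 0 := left_ne_zero_of_mul (hgeom ▸ hden)
  have hsum : ∑ j ∈ range L, (-t : ℂ) ^ j * cexp (I * momentum L m * ((j - y : ℤ) : ℂ)) =
      cexp (-I * momentum L m * y) * ∑ j ∈ range L, (-x) ^ j := by
    rw [mul_sum]
    refine sum_congr rfl fun j _ => ?_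
    rw [neg_mul_eq_neg_mul, mul_pow, ← exp_nat_mul, mul_left_comm, ← exp_add]
    push_cast
    ring_nf
  rw [div_eq_div_iff hx hden, hsum, ← hgeom]
  ring

theorem sOmega_one_eq (hL : Even L) (hL0 : L ≠ 0) (t : ℝ) (y : ℤ) :
    sOmega t L 1 y = (((-1 : ℝ) ^ (y / L) * (-t) ^ (y % L).toNat / (1 + t ^ L) : ℝ) : ℂ) := by
  have hy : (((y % L).toNat : ℤ) - y) / L = -(y / L) := by
    rw [Int.toNat_of_nonneg (Int.emod_nonneg y (by omega)), Int.emod_def, sub_sub_cancel_left,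
      ← mul_neg, Int.mul_ediv_cancel_left _ (by omega)]
  rw [sOmega_eq]
  simp only [ofReal_one, one_mul, cexp_div_one_add_mul_cexp_momentum hL hL0]
  rw [← sum_div, sum_comm]
  simp only [← mul_sum, sum_momentumWindow_cexp hL0, mul_ite, mul_zero]
  rw [sum_range_ite_dvd_sub hL0, hy, zpow_neg, ← inv_zpow, inv_neg_one]
  have hL' : (L : ℂ) ≠ 0 := by exact_mod_cast hL0
  push_cast
  field_simp

theorem sOmega_antiperiodic (t : ℝ) (ε : ℝ) : Function.Antiperiodic (sOmega t L ε) L := by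
  intro y
  rcases eq_or_ne L 0 with rfl | hL
  · simp [sOmega]
  rw [sOmega_eq, sOmega_eq, ← mul_neg, ← sum_neg_distrib]
  refine congrArg _ (sum_congr rfl fun m _ => ?_)
  have hanti : -I * momentum L m * ((y + L : ℤ) : ℂ) =
      -I * momentum L m * y + -(I * momentum L m * L) := by
    push_cast
    ring
  rw [← neg_div, hanti, exp_add, exp_neg, cexp_I_momentum_mul_L hL, inv_neg_one, mul_neg_one]

theorem momentum_one_sub (m : ℤ) : momentum L (1 - m) = -momentum L m := by
  simp only [momentum]
  push_cast
  ring

theorem sOmega_neg_one (hL : Even L) (t : ℝ) (y : ℤ) : sOmega t L (-1) y = sOmega t L 1 (-y) := by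
  rw [sOmega_eq, sOmega_eq]
  have hmem : ∀ m ∈ momentumWindow L, 1 - m ∈ momentumWindow L := by
    obtain ⟨p, rfl⟩ := hL
    intro m hm
    simp only [momentumWindow, mem_Icc] at hm ⊢
    omega
  refine congrArg _ (sum_nbij' (1 - ·) (1 - ·) hmem hmem (by simp) (by simp) fun m _ => ?_)
  rw [momentum_one_sub]
  push_cast
  ring_nf

theorem norm_sOmega_one_le (hL : Even L) (hL0 : L ≠ 0) (t : ℝ) (y : ℤ) :
    ‖sOmega t L 1 y‖ ≤ |t| ^ (y % L).toNat := by
  have hden : 1 ≤ 1 + t ^ L := le_add_of_nonneg_right (hL.pow_nonneg t)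
  rw [sOmega_one_eq hL hL0, norm_real, Real.norm_eq_abs, abs_div, abs_mul, abs_neg_one_zpow,
    one_mul, abs_pow, abs_neg, abs_of_pos (a := 1 + t ^ L) (by linarith)]
  exact div_le_self (by positivity) hden

theorem exists_norm_sOmega_le (hL : Even L) (hL0 : L ≠ 0) (t : ℝ) {ε : ℝ} (hε : ε = 1 ∨ ε = -1)
    (y : ℤ) : ∃ n : ℤ, ‖sOmega t L ε y‖ ≤ |t| ^ (y - n * L).natAbs := by
  have hL' : (0 : ℤ) < L := by omega
  rcases hε with rfl | rfl
  · refine ⟨y / L, (norm_sOmega_one_le hL hL0 t y).trans_eq ?_⟩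
    have hr : y - y / L * L = y % L := by rw [Int.emod_def, mul_comm]
    have := Int.emod_nonneg y hL'.ne'
    rw [hr]
    congr 1
    omega
  · refine ⟨-(-y / L), ?_⟩
    rw [sOmega_neg_one hL]
    refine (norm_sOmega_one_le hL hL0 t (-y)).trans_eq ?_
    have hr : y - -(-y / L) * L = -(-y % L) := by rw [Int.emod_def]; ring
    have := Int.emod_nonneg (-y) hL'.ne'
    rw [hr, Int.natAbs_neg]
    congr 1
    omega

end

/-- For `0 < t₁ < 1` and `L` a positive even integer: `s_±(y)` is real, `s₊(y) = s₋(-y)`,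
`s_±(y+L) = -s_±(y)`, and `|s_±(y)| ≤ C ρ^{|y|_L}` where `|y|_L = min_{n ∈ ℤ} |y - nL|`
(stated as: for some `n`, `|s_±(y)| ≤ C ρ^{|y - nL|}`), with constants `C > 0`,
`0 < ρ < 1` depending only on `t₁`, uniformly in `L`. -/
theorem sOmega_properties (t1 : ℝ) (h0 : 0 < t1) (h1 : t1 < 1) :
    (∀ L : ℕ, Even L → 0 < L → ∀ y : ℤ,
        (∀ ε : ℝ, ε = 1 ∨ ε = -1 →
          (sOmega t1 L ε y).im = 0 ∧ sOmega t1 L ε (y + L) = -sOmega t1 L ε y) ∧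
        sOmega t1 L 1 y = sOmega t1 L (-1) (-y)) ∧
    (∃ C ρ : ℝ, 0 < C ∧ 0 < ρ ∧ ρ < 1 ∧
      ∀ L : ℕ, Even L → 0 < L → ∀ ε : ℝ, ε = 1 ∨ ε = -1 → ∀ y : ℤ,
        ∃ n : ℤ, ‖sOmega t1 L ε y‖ ≤ C * ρ ^ (y - n * L).natAbs) := by
  refine ⟨fun L hL hpos y => ⟨fun ε hε => ⟨?_, sOmega_antiperiodic t1 ε y⟩, ?_⟩,
    ⟨1, t1, one_pos, h0, h1, fun L hL hpos ε hε y => ?_⟩⟩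
  · rcases hε with rfl | rfl
    · rw [sOmega_one_eq hL hpos.ne']
      exact ofReal_im _
    · rw [sOmega_neg_one hL, sOmega_one_eq hL hpos.ne']
      exact ofReal_im _
  · rw [sOmega_neg_one hL, neg_neg]
  · simpa only [one_mul, abs_of_pos h0] using exists_norm_sOmega_le hL hpos.ne' t1 hε y
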